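/- For a square-summable sequence φ: ℤ^d → ℂ, any fixed index j ∈ {1,…,d}, and any p ∈ {1,…,2^{d−1}}, we have ‖φ‖_{ℓ∞(ℤ^d)}^{2^d} ≤ 2^{d·2^{d−1}−p} · ‖D_j φ‖_{ℓ²(ℤ^d)}^p · ‖φ‖_{ℓ²(ℤ^d)}^{2^d−p}. -/

import Mathlib

noncomputable section

/-- Partial difference operator in direction `i` on ℤ^d. -/
def Dop {d : ℕ} (i : Fin d) (φ : (Fin d → ℤ) → ℂ) : (Fin d → ℤ) → ℂ :=
  fun ζ => φ (Function.update ζ i (ζ i + 1)) - φ ζ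

/-- The ℓ²(ℤ^d) norm. -/
def l2 {d : ℕ} (φ : (Fin d → ℤ) → ℂ) : ℝ := Real.sqrt (∑' ζ : Fin d → ℤ, ‖φ ζ‖ ^ 2)

/-- The ℓ∞(ℤ^d) norm. -/
def lsup {d : ℕ} (φ : (Fin d → ℤ) → ℂ) : ℝ := ⨆ ζ : Fin d → ℤ, ‖φ ζ‖

/-- The ℓ²(ℤ^d) norm of the discrete gradient. -/
def gradn {d : ℕ} (φ : (Fin d → ℤ) → ℂ) : ℝ :=
  Real.sqrt (∑ i : Fin d, ∑' ζ : Fin d → ℤ, ‖Dop i φ ζ‖ ^ 2)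

/-! On a line parallel to `e_j`, telescoping `|φ|²` from both ends gives
`2 |φ(n)|² ≤ ∑ₜ |D_j φ(t)| (|φ(t+1)| + |φ(t)|)`, and Cauchy–Schwarz bounds the right side by
`2 ‖D_j φ‖₂ ‖φ‖₂`. Hence `‖φ‖∞² ≤ ‖D_j φ‖₂ ‖φ‖₂`; with `‖φ‖∞² ≤ ‖φ‖₂²` and
`‖φ‖∞^(2^d) = (‖φ‖∞²)^p (‖φ‖∞²)^(2^(d-1) - p)` this gives the estimate even without the power
of `2`. -/

open Filter Topology Function

theorem summable_mul_and_tsum_mul_le_sqrt_mul_sqrt {ι : Type*} {f g : ι → ℝ}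
    (hf : ∀ i, 0 ≤ f i) (hg : ∀ i, 0 ≤ g i)
    (hf₂ : Summable fun i => f i ^ 2) (hg₂ : Summable fun i => g i ^ 2) :
    (Summable fun i => f i * g i) ∧ ∑' i, f i * g i ≤ √(∑' i, f i ^ 2) * √(∑' i, g i ^ 2) := by
  simpa [Real.sqrt_eq_rpow] using Real.summable_and_inner_le_Lp_mul_Lq_tsum_of_nonneg .two_two
    hf hg (by simpa using hf₂) (by simpa using hg₂)

theorem le_tsum_of_sub_succ_le {u v : ℕ → ℝ} (hu : Tendsto u atTop (𝓝 0)) (hv : Summable v)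
    (huv : ∀ k, u k - u (k + 1) ≤ v k) : u 0 ≤ ∑' k, v k := by
  have hpartial (K : ℕ) : u 0 ≤ u K + ∑ k ∈ Finset.range K, v k := by
    have := Finset.sum_le_sum fun k (_ : k ∈ Finset.range K) => huv k
    rw [Finset.sum_range_sub'] at this
    linarith
  simpa using ge_of_tendsto (hu.add hv.hasSum.tendsto_sum_nat) (.of_forall hpartial)

theorem two_mul_le_tsum_of_abs_sub_le {u v : ℤ → ℝ} (hu : Tendsto u cofinite (𝓝 0))
    (hv : Summable v) (huv : ∀ t, |u (t + 1) - u t| ≤ v t) (n : ℤ) :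
    2 * u n ≤ ∑' t, v t := by
  have tendsto_comp {e : ℕ → ℤ} (he : Injective e) : Tendsto (u ∘ e) atTop (𝓝 0) :=
    Nat.cofinite_eq_atTop ▸ hu.comp he.tendsto_cofinite
  have hv_pos : Summable fun k : ℕ => v (k + n) :=
    hv.comp_injective fun a b h => by simpa using h
  have hv_neg : Summable fun k : ℕ => v (-(k + 1) + n) :=
    hv.comp_injective fun a b h => by simpa using h
  have hup : u n ≤ ∑' k : ℕ, v (k + n) := by
    simpa using le_tsum_of_sub_succ_le (u := fun k : ℕ => u (k + n))
      (tendsto_comp fun a b h => by simpa using h) hv_pos fun k => by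
        have := abs_le.mp (huv (k + n))
        push_cast
        rw [add_right_comm (k : ℤ) 1 n]
        linarith
  have hdown : u n ≤ ∑' k : ℕ, v (-(k + 1) + n) := by
    simpa using le_tsum_of_sub_succ_le (u := fun k : ℕ => u (n - k))
      (tendsto_comp fun a b h => by simpa using h) hv_neg fun k => by
        have := abs_le.mp (huv (-(k + 1) + n))
        push_cast
        ring_nf at *
        linarith
  have hsplit : ∑' t, v t = ∑' k : ℕ, v (k + n) + ∑' k : ℕ, v (-(k + 1) + n) := by
    rw [← (Equiv.addRight n).tsum_eq]
    exact tsum_of_nat_of_neg_add_one hv_pos hv_neg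
  linarith

section SeminormedAddCommGroup

variable {E : Type*} [SeminormedAddCommGroup E]

theorem Summable.sq_norm_comp_sub {α : Type*} {f : α → E} (hf : Summable fun a => ‖f a‖ ^ 2)
    {σ : α → α} (hσ : Injective σ) : Summable fun a => ‖f (σ a) - f a‖ ^ 2 :=
  .of_nonneg_of_le (fun _ => sq_nonneg _)
    (fun _ => (pow_le_pow_left₀ (norm_nonneg _) (norm_sub_le _ _) 2).trans add_sq_le)
    (((hf.comp_injective hσ).add hf).mul_left 2)

theorem abs_sq_norm_sub_sq_norm_le (a b : E) :
    |‖a‖ ^ 2 - ‖b‖ ^ 2| ≤ ‖a - b‖ * ‖a‖ + ‖a - b‖ * ‖b‖ := by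
  rw [sq_sub_sq, abs_mul, abs_of_nonneg (by positivity), ← mul_add, mul_comm]
  gcongr
  exact abs_norm_sub_norm_le a b

theorem Int.sq_norm_le_sqrt_mul_sqrt {ψ : ℤ → E} (hψ : Summable fun t => ‖ψ t‖ ^ 2) (n : ℤ) :
    ‖ψ n‖ ^ 2 ≤ √(∑' t, ‖ψ (t + 1) - ψ t‖ ^ 2) * √(∑' t, ‖ψ t‖ ^ 2) := by
  have hshift : Summable fun t => ‖ψ (t + 1)‖ ^ 2 := hψ.comp_injective (add_left_injective 1)
  have hshift_eq : ∑' t, ‖ψ (t + 1)‖ ^ 2 = ∑' t, ‖ψ t‖ ^ 2 :=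
    (Equiv.addRight 1).tsum_eq fun t => ‖ψ t‖ ^ 2
  have hD := hψ.sq_norm_comp_sub (add_left_injective 1)
  obtain ⟨hs₁, hcs₁⟩ := summable_mul_and_tsum_mul_le_sqrt_mul_sqrt
    (fun _ => norm_nonneg _) (fun _ => norm_nonneg _) hD hshift
  obtain ⟨hs₂, hcs₂⟩ := summable_mul_and_tsum_mul_le_sqrt_mul_sqrt
    (fun _ => norm_nonneg _) (fun _ => norm_nonneg _) hD hψ
  have htel := two_mul_le_tsum_of_abs_sub_le (u := fun t => ‖ψ t‖ ^ 2)
    (by simpa using hψ.tendsto_cofinite_zero) (hs₁.add hs₂)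
    (fun t => abs_sq_norm_sub_sq_norm_le _ _) n
  rw [hs₁.tsum_add hs₂] at htel
  rw [hshift_eq] at hcs₁
  linarith

end SeminormedAddCommGroup

theorem pow_le_pow_mul_pow_of_le_mul_of_le_sq {x a b : ℝ} {p m : ℕ} (hx : 0 ≤ x)
    (hxab : x ≤ a * b) (hxb : x ≤ b ^ 2) (hpm : p ≤ m) :
    x ^ m ≤ a ^ p * b ^ (2 * m - p) := by
  calc x ^ m = x ^ p * x ^ (m - p) := by rw [← pow_add, Nat.add_sub_cancel' hpm]
    _ ≤ (a * b) ^ p * (b ^ 2) ^ (m - p) :=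
      mul_le_mul (pow_le_pow_left₀ hx hxab p) (pow_le_pow_left₀ hx hxb _) (pow_nonneg hx _)
        (pow_nonneg (hx.trans hxab) _)
    _ = a ^ p * b ^ (2 * m - p) := by
      rw [mul_pow, mul_assoc, ← pow_mul, ← pow_add]
      congr 2
      omega

section Lattice

variable {d : ℕ}

theorem Dop_update (j : Fin d) (φ : (Fin d → ℤ) → ℂ) (ζ : Fin d → ℤ) (t : ℤ) :
    Dop j φ (update ζ j t) = φ (update ζ j (t + 1)) - φ (update ζ j t) := by
  simp [Dop]

theorem injective_update_add_one (j : Fin d) :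
    Injective fun ζ : Fin d → ℤ => update ζ j (ζ j + 1) :=
  LeftInverse.injective (g := fun ζ => update ζ j (ζ j - 1)) fun ζ => by simp

theorem summable_sq_norm_Dop {φ : (Fin d → ℤ) → ℂ} (h : Summable fun ζ => ‖φ ζ‖ ^ 2)
    (j : Fin d) : Summable fun ζ => ‖Dop j φ ζ‖ ^ 2 :=
  h.sq_norm_comp_sub (injective_update_add_one j)

theorem sq_norm_le_l2_Dop_mul_l2 {φ : (Fin d → ℤ) → ℂ} (h : Summable fun ζ => ‖φ ζ‖ ^ 2)
    (j : Fin d) (ζ : Fin d → ℤ) : ‖φ ζ‖ ^ 2 ≤ l2 (Dop j φ) * l2 φ := by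
  have hline : Injective (update ζ j) := update_injective ζ j
  have key := Int.sq_norm_le_sqrt_mul_sqrt (ψ := fun t => φ (update ζ j t))
    (h.comp_injective hline) (ζ j)
  simp only [update_eq_self, ← Dop_update] at key
  refine key.trans (mul_le_mul ?_ ?_ (Real.sqrt_nonneg _) (Real.sqrt_nonneg _))
  · exact Real.sqrt_le_sqrt (tsum_comp_le_tsum_of_inj (f := fun ζ => ‖Dop j φ ζ‖ ^ 2)
      (summable_sq_norm_Dop h j) (fun _ => sq_nonneg _) hline)
  · exact Real.sqrt_le_sqrt (tsum_comp_le_tsum_of_inj (f := fun ζ => ‖φ ζ‖ ^ 2) h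
      (fun _ => sq_nonneg _) hline)

theorem sq_lsup_le {φ : (Fin d → ℤ) → ℂ} {c : ℝ} (hc : ∀ ζ, ‖φ ζ‖ ^ 2 ≤ c) :
    lsup φ ^ 2 ≤ c := by
  have hc0 : 0 ≤ c := (sq_nonneg _).trans (hc 0)
  have hsqrt : lsup φ ≤ √c := ciSup_le fun ζ => Real.le_sqrt_of_sq_le (hc ζ)
  calc lsup φ ^ 2 ≤ √c ^ 2 := pow_le_pow_left₀ (Real.iSup_nonneg fun _ => norm_nonneg _) hsqrt 2
    _ = c := Real.sq_sqrt hc0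

theorem sq_norm_le_sq_l2 {φ : (Fin d → ℤ) → ℂ} (h : Summable fun ζ => ‖φ ζ‖ ^ 2)
    (ζ : Fin d → ℤ) : ‖φ ζ‖ ^ 2 ≤ l2 φ ^ 2 := by
  rw [l2, Real.sq_sqrt (tsum_nonneg fun _ => sq_nonneg _)]
  exact h.le_tsum ζ fun _ _ => sq_nonneg _

end Lattice

theorem agmon_single_direction_general {d : ℕ} (φ : (Fin d → ℤ) → ℂ)
    (h : Summable fun ζ : Fin d → ℤ => ‖φ ζ‖ ^ 2) (j : Fin d) (p : ℕ)
    (hp2 : p ≤ 2 ^ (d - 1)) :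
    lsup φ ^ (2 ^ d) ≤
      2 ^ (d * 2 ^ (d - 1) - p) * l2 (Dop j φ) ^ p * l2 φ ^ (2 ^ d - p) := by
  have hd : 2 ^ d = 2 * 2 ^ (d - 1) := by rw [← pow_succ', Nat.sub_add_cancel j.pos]
  have key : lsup φ ^ 2 ^ d ≤ l2 (Dop j φ) ^ p * l2 φ ^ (2 ^ d - p) := by
    rw [hd, pow_mul]
    exact pow_le_pow_mul_pow_of_le_mul_of_le_sq (sq_nonneg _)
      (sq_lsup_le (sq_norm_le_l2_Dop_mul_l2 h j))
      (sq_lsup_le (sq_norm_le_sq_l2 h)) hp2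
  rw [mul_assoc]
  refine key.trans (le_mul_of_one_le_left ?_ (one_le_pow₀ one_le_two))
  exact mul_nonneg (pow_nonneg (Real.sqrt_nonneg _) _) (pow_nonneg (Real.sqrt_nonneg _) _)

/-- Single-direction Agmon–Kolmogorov estimate on ℤ^d. -/
theorem agmon_single_direction {d : ℕ} (hd : 1 ≤ d) (φ : (Fin d → ℤ) → ℂ)
    (h : Summable fun ζ : Fin d → ℤ => ‖φ ζ‖ ^ 2) (j : Fin d) (p : ℕ)
    (hp1 : 1 ≤ p) (hp2 : p ≤ 2 ^ (d - 1)) :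
    lsup φ ^ (2 ^ d) ≤
      2 ^ (d * 2 ^ (d - 1) - p) * l2 (Dop j φ) ^ p * l2 φ ^ (2 ^ d - p) :=
  agmon_single_direction_general φ h j p hp2
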